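/- Protocol ordering of cascade centralities on the path networks: for N ≥ 4 agents and every seed agent j with 1 ≤ j ≤ N, the multiplex cascade centralities satisfy the strict inequalities C_j^{𝒢_R, OR} > C_j^{G_Pa} > C_j^{𝒢_R, AND}, where C_j^{𝒢_R, OR} (respectively C_j^{𝒢_R, AND}) is the cascade centrality of j on the duplex repeated path network 𝒢_R with all agents using Protocol OR (respectively Protocol AND), and C_j^{G_Pa} is the cascade centrality of j on the monoplex path network G_Pa. -/

import Mathlib

open MeasureTheory

inductive Protocol
  | OR
  | AND
deriving DecidableEq

noncomputable def ltmStep {n m : ℕ} (w : Fin m → Fin n → Fin n → ℝ)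
    (u : Fin n → Protocol) (μ : Fin n → Fin m → ℝ)
    (A : Finset (Fin n)) : Finset (Fin n) :=
  A ∪ Finset.univ.filter fun i =>
    (u i = Protocol.OR ∧ ∃ k, μ i k < ∑ j ∈ A, w k i j) ∨
    (u i = Protocol.AND ∧ ∀ k, μ i k < ∑ j ∈ A, w k i j)

noncomputable def ltmSS {n m : ℕ} (w : Fin m → Fin n → Fin n → ℝ)
    (u : Fin n → Protocol) (S₀ : Finset (Fin n))
    (μ : Fin n → Fin m → ℝ) : Finset (Fin n) :=
  (ltmStep w u μ)^[n] S₀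

noncomputable def thMeasure (n m : ℕ) : Measure (Fin n → Fin m → ℝ) :=
  Measure.pi fun _ => Measure.pi fun _ => volume.restrict (Set.Icc (0:ℝ) 1)

noncomputable def pLTM {n m : ℕ} (w : Fin m → Fin n → Fin n → ℝ)
    (u : Fin n → Protocol) (S₀ : Finset (Fin n)) (i : Fin n) : ℝ :=
  (thMeasure n m {μ | i ∈ ltmSS w u S₀ μ}).toReal

def lemStep {n m : ℕ} (S₀ : Finset (Fin n)) (u : Fin n → Protocol)
    (σ : Fin n → Fin m → Fin n) (A : Finset (Fin n)) : Finset (Fin n) :=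
  S₀ ∪ A ∪ Finset.univ.filter fun i =>
    (u i = Protocol.OR ∧ ∃ k, σ i k ∈ A) ∨
    (u i = Protocol.AND ∧ ∀ k, σ i k ∈ A)

def UReachable {n m : ℕ} (S₀ : Finset (Fin n)) (u : Fin n → Protocol)
    (σ : Fin n → Fin m → Fin n) (i : Fin n) : Prop :=
  i ∈ (lemStep S₀ u σ)^[n] S₀

instance {n m : ℕ} (S₀ : Finset (Fin n)) (u : Fin n → Protocol)
    (σ : Fin n → Fin m → Fin n) (i : Fin n) : Decidable (UReachable S₀ u σ i) := by
  unfold UReachable; infer_instance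

noncomputable def rProb {n m : ℕ} (w : Fin m → Fin n → Fin n → ℝ)
    (S₀ : Finset (Fin n)) (u : Fin n → Protocol) (i : Fin n) : ℝ :=
  ∑ σ : Fin n → Fin m → Fin n,
    if UReachable S₀ u σ i then ∏ a : Fin n, ∏ k : Fin m, w k a (σ a k) else 0

noncomputable def casCen {n m : ℕ} (w : Fin m → Fin n → Fin n → ℝ)
    (u : Fin n → Protocol) (j : Fin n) : ℝ :=
  ∑ i : Fin n, pLTM w u {j} i

noncomputable def pathW (N : ℕ) (i j : Fin N) : ℝ :=
  if j.val = i.val + 1 ∨ i.val = j.val + 1 then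
    (if i.val = 0 ∨ i.val = N - 1 then 1 else 1/2)
  else 0

noncomputable def cycleW (N : ℕ) (i j : Fin N) : ℝ :=
  if (i.val + 1) % N = j.val ∨ (j.val + 1) % N = i.val then 1/2 else 0

noncomputable def permW2 (N : ℕ) (i j : Fin N) : ℝ :=
  if ((i.val + 1) % N = j.val ∨ (j.val + 1) % N = i.val) ∧
      ¬((i.val = N - 2 ∧ j.val = N - 1) ∨ (i.val = N - 1 ∧ j.val = N - 2)) then
    (if i.val = N - 2 ∨ i.val = N - 1 then 1 else 1/2)
  else 0

/-!
On a duplex network with two identical layers, Protocol OR behaves like the monoplex model in which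
each agent uses the smaller of its two thresholds, and Protocol AND like the one using the larger.
Hence all three cascades live on one probability space with pointwise ordered thresholds, and the
cascade is antitone in the thresholds. For strictness, take a neighbour `i₀` of the seed `j` that
is not an endpoint of the path (one exists when `N ≥ 4`): it receives weight `1/2` from `j`, and
nothing beyond `i₀` can become active before `i₀` does. So when one threshold of `i₀` lies below
`1/2` and the other above, an event of positive probability, `i₀` is activated in one model but
not in the other.
-/

open Finset

section Cascade

variable {n m : ℕ} {w : Fin m → Fin n → Fin n → ℝ} {u : Fin n → Protocol}

lemma id_le_ltmStep (μ : Fin n → Fin m → ℝ) : id ≤ ltmStep w u μ :=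
  fun _ => subset_union_left

lemma ltmStep_mono (hw : ∀ k i j, 0 ≤ w k i j) {μ μ' : Fin n → Fin m → ℝ} (hμ : μ ≤ μ')
    {A B : Finset (Fin n)} (hAB : A ⊆ B) : ltmStep w u μ' A ⊆ ltmStep w u μ B := by
  have hsum (k : Fin m) (i : Fin n) : ∑ j ∈ A, w k i j ≤ ∑ j ∈ B, w k i j :=
    sum_le_sum_of_subset_of_nonneg hAB fun j _ _ => hw k i j
  intro i
  simp only [ltmStep, mem_union, mem_filter, mem_univ, true_and]
  rintro (hi | ⟨hOR, k, hk⟩ | ⟨hAND, hk⟩)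
  · exact Or.inl (hAB hi)
  · exact Or.inr <| Or.inl ⟨hOR, k, (hμ i k).trans_lt (hk.trans_le (hsum k i))⟩
  · exact Or.inr <| Or.inr ⟨hAND, fun k => (hμ i k).trans_lt ((hk k).trans_le (hsum k i))⟩

lemma ltmSS_antitone (hw : ∀ k i j, 0 ≤ w k i j) (S₀ : Finset (Fin n))
    {μ μ' : Fin n → Fin m → ℝ} (hμ : μ ≤ μ') : ltmSS w u S₀ μ' ⊆ ltmSS w u S₀ μ :=
  Monotone.iterate_le_of_le (fun _ _ => ltmStep_mono hw le_rfl)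
    (fun _ => ltmStep_mono hw hμ subset_rfl) n S₀

lemma disjoint_ltmSS_of_inflow_le [NeZero m] (hw : ∀ k i j, 0 ≤ w k i j)
    {S₀ C : Finset (Fin n)} {μ : Fin n → Fin m → ℝ} (hS₀ : Disjoint S₀ C)
    (hC : ∀ x ∈ C, ∀ k, ∑ y ∈ Cᶜ, w k x y ≤ μ x k) : Disjoint (ltmSS w u S₀ μ) C := by
  suffices ∀ t, Disjoint ((ltmStep w u μ)^[t] S₀) C from this n
  intro t
  induction t with
  | zero => exact hS₀
  | succ t ih =>
    rw [Function.iterate_succ_apply', disjoint_right]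
    intro x hxC hx
    have hle (k : Fin m) : ∑ y ∈ (ltmStep w u μ)^[t] S₀, w k x y ≤ μ x k :=
      (sum_le_sum_of_subset_of_nonneg (subset_compl_iff_disjoint_right.2 ih)
        fun y _ _ => hw k x y).trans (hC x hxC k)
    simp only [ltmStep, mem_union, mem_filter, mem_univ, true_and] at hx
    rcases hx with hx | ⟨-, k, hk⟩ | ⟨-, hk⟩
    · exact disjoint_left.1 ih hx hxC
    · exact (hle k).not_gt hk
    · exact (hle 0).not_gt (hk 0)

end Cascade

section Monoplex

variable {n : ℕ} {w : Fin 1 → Fin n → Fin n → ℝ}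

lemma mem_ltmStep_fin_one {u : Fin n → Protocol} {μ : Fin n → Fin 1 → ℝ}
    {A : Finset (Fin n)} {i : Fin n} :
    i ∈ ltmStep w u μ A ↔ i ∈ A ∨ μ i 0 < ∑ j ∈ A, w 0 i j := by
  cases hu : u i <;> simp [ltmStep, hu, Fin.exists_fin_one, Fin.forall_fin_one]

lemma mem_ltmSS_of_lt_sum_seed (u : Fin n → Protocol) {S₀ : Finset (Fin n)}
    {μ : Fin n → Fin 1 → ℝ} {i : Fin n} (hi : μ i 0 < ∑ j ∈ S₀, w 0 i j) :
    i ∈ ltmSS w u S₀ μ :=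
  Function.monotone_iterate_of_id_le (id_le_ltmStep μ) (Nat.one_le_iff_ne_zero.2 i.pos.ne') S₀
    (mem_ltmStep_fin_one.2 (Or.inr hi))

lemma ltmSS_duplex_OR (W : Fin n → Fin n → ℝ) (u : Fin n → Protocol) (S₀ : Finset (Fin n))
    (μ : Fin n → Fin 2 → ℝ) :
    ltmSS (fun _ : Fin 2 => W) (fun _ => Protocol.OR) S₀ μ
      = ltmSS (fun _ : Fin 1 => W) u S₀ (fun a _ => min (μ a 0) (μ a 1)) := by
  unfold ltmSS
  congr 1
  ext A i
  rw [mem_ltmStep_fin_one]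
  simp [ltmStep, Fin.exists_fin_two]

lemma ltmSS_duplex_AND (W : Fin n → Fin n → ℝ) (u : Fin n → Protocol) (S₀ : Finset (Fin n))
    (μ : Fin n → Fin 2 → ℝ) :
    ltmSS (fun _ : Fin 2 => W) (fun _ => Protocol.AND) S₀ μ
      = ltmSS (fun _ : Fin 1 => W) u S₀ (fun a _ => max (μ a 0) (μ a 1)) := by
  unfold ltmSS
  congr 1
  ext A i
  rw [mem_ltmStep_fin_one]
  simp [ltmStep, Fin.forall_fin_two]

end Monoplex

section Probability

instance : IsProbabilityMeasure (volume.restrict (Set.Icc (0 : ℝ) 1)) :=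
  ⟨by simp [Real.volume_Icc]⟩

instance (n m : ℕ) : IsProbabilityMeasure (thMeasure n m) := by
  unfold thMeasure; infer_instance

variable {n m : ℕ}

lemma measurable_ltmStep_iterate (w : Fin m → Fin n → Fin n → ℝ) (u : Fin n → Protocol)
    (S₀ : Finset (Fin n)) (t : ℕ) :
    Measurable fun μ : Fin n → Fin m → ℝ => (ltmStep w u μ)^[t] S₀ := by
  induction t with
  | zero => exact measurable_const
  | succ t ih =>
    simp only [Function.iterate_succ_apply']
    rw [measurable_finset_iff] at ih ⊢
    intro i
    have hsum (k : Fin m) : Measurable fun μ : Fin n → Fin m → ℝ =>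
        ∑ j ∈ (ltmStep w u μ)^[t] S₀, w k i j := by
      simp only [← sum_ite_mem_eq ((ltmStep w u _)^[t] S₀)]
      exact Finset.measurable_sum _ fun j _ =>
        Measurable.ite (ih j).setOf measurable_const measurable_const
    simp only [ltmStep, mem_union, mem_filter, mem_univ, true_and]
    fun_prop

lemma measurePreserving_layer (k : Fin m) :
    MeasurePreserving (fun (μ : Fin n → Fin m → ℝ) a (_ : Fin 1) => μ a k)
      (thMeasure n m) (thMeasure n 1) :=
  measurePreserving_pi _ _ fun _ =>
    (measurePreserving_funUnique _ (Fin 1)).symm.comp (measurePreserving_eval _ k)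

lemma pLTM_eq_measure_layer (w : Fin 1 → Fin n → Fin n → ℝ) (u : Fin n → Protocol)
    (S₀ : Finset (Fin n)) (i : Fin n) (k : Fin m) :
    pLTM w u S₀ i = (thMeasure n m {μ | i ∈ ltmSS w u S₀ (fun a _ => μ a k)}).toReal := by
  rw [pLTM, ← (measurePreserving_layer k).measure_preimage]
  · rfl
  · exact ((measurable_finset_mem i).comp
      (measurable_ltmStep_iterate w u S₀ n)).setOf.nullMeasurableSet

lemma thMeasure_pi_ne_zero {s : Fin n → Fin m → Set ℝ}
    (hs : ∀ a k, volume.restrict (Set.Icc (0 : ℝ) 1) (s a k) ≠ 0) :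
    thMeasure n m (Set.univ.pi fun a => Set.univ.pi (s a)) ≠ 0 := by
  simp only [thMeasure, Measure.pi_pi, prod_ne_zero_iff]
  exact fun a _ k _ => hs a k

lemma volume_restrict_Icc_Ioo_ne_zero {a b : ℝ} (ha : 0 ≤ a) (hab : a < b) (hb : b ≤ 1) :
    volume.restrict (Set.Icc (0 : ℝ) 1) (Set.Ioo a b) ≠ 0 := by
  rw [Measure.restrict_apply measurableSet_Ioo,
    Set.inter_eq_left.2 (Set.Ioo_subset_Icc_self.trans (Set.Icc_subset_Icc ha hb))]
  simpa using hab

end Probability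

lemma sum_measure_mem_ltmSS_lt {n m : ℕ} {Ω : Type*} [MeasurableSpace Ω] (P : Measure Ω)
    [IsFiniteMeasure P] {w : Fin m → Fin n → Fin n → ℝ} (hw : ∀ k i j, 0 ≤ w k i j)
    (u : Fin n → Protocol) (S₀ : Finset (Fin n)) {ν ν' : Ω → Fin n → Fin m → ℝ}
    (hνν' : ∀ ω, ν ω ≤ ν' ω) {i₀ : Fin n} {E : Set Ω} (hE : MeasurableSet E) (hEpos : P E ≠ 0)
    (hact : ∀ ω ∈ E, i₀ ∈ ltmSS w u S₀ (ν ω)) (hblock : ∀ ω ∈ E, i₀ ∉ ltmSS w u S₀ (ν' ω)) :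
    ∑ i, (P {ω | i ∈ ltmSS w u S₀ (ν' ω)}).toReal
      < ∑ i, (P {ω | i ∈ ltmSS w u S₀ (ν ω)}).toReal := by
  have hsub (i : Fin n) : {ω | i ∈ ltmSS w u S₀ (ν' ω)} ⊆ {ω | i ∈ ltmSS w u S₀ (ν ω)} :=
    fun ω hω => ltmSS_antitone hw S₀ (hνν' ω) hω
  refine sum_lt_sum (fun i _ => ENNReal.toReal_mono (measure_ne_top P _) (measure_mono (hsub i)))
    ⟨i₀, mem_univ _, ENNReal.toReal_strict_mono (measure_ne_top P _) ?_⟩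
  have hdisj : Disjoint {ω | i₀ ∈ ltmSS w u S₀ (ν' ω)} E :=
    Set.disjoint_right.2 hblock
  calc P {ω | i₀ ∈ ltmSS w u S₀ (ν' ω)}
      < P {ω | i₀ ∈ ltmSS w u S₀ (ν' ω)} + P E := ENNReal.lt_add_right (measure_ne_top P _) hEpos
    _ = P ({ω | i₀ ∈ ltmSS w u S₀ (ν' ω)} ∪ E) := (measure_union hdisj hE).symm
    _ ≤ P {ω | i₀ ∈ ltmSS w u S₀ (ν ω)} := measure_mono (Set.union_subset (hsub i₀) hact)

section Path

variable {N : ℕ}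

lemma pathW_nonneg (i j : Fin N) : 0 ≤ pathW N i j := by
  unfold pathW; split_ifs <;> norm_num

lemma adjacent_of_pathW_ne_zero {x y : Fin N} (h : pathW N x y ≠ 0) :
    y.val = x.val + 1 ∨ x.val = y.val + 1 := by
  by_contra hxy
  exact h (if_neg hxy)

lemma pathW_eq_half_of_interior {x y : Fin N} (h0 : x.val ≠ 0) (h1 : x.val ≠ N - 1)
    (hxy : y.val = x.val + 1 ∨ x.val = y.val + 1) : pathW N x y = 1 / 2 := by
  rw [pathW, if_pos hxy, if_neg (by omega)]

lemma exists_interior_adjacent (hN : 4 ≤ N) (j : Fin N) :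
    ∃ i : Fin N, i.val ≠ 0 ∧ i.val ≠ N - 1 ∧ (i.val = j.val + 1 ∨ j.val = i.val + 1) := by
  by_cases hj : j.val + 2 < N
  · exact ⟨⟨j.val + 1, by omega⟩, by simp, by simp; omega, by simp⟩
  · exact ⟨⟨j.val - 1, by omega⟩, by simp; omega, by simp; omega, by simp; omega⟩

/-- The agents on the far side of `i₀` as seen from `j`, including `i₀` itself. -/
def pathFarSide (j i₀ : Fin N) : Finset (Fin N) :=
  univ.filter fun b => (j < i₀ ∧ i₀ ≤ b) ∨ (i₀ < j ∧ b ≤ i₀)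

lemma eq_of_pathW_ne_zero_farSide {j i₀ x y : Fin N}
    (hadj : i₀.val = j.val + 1 ∨ j.val = i₀.val + 1)
    (hx : x ∈ pathFarSide j i₀) (hy : y ∉ pathFarSide j i₀) (hxy : pathW N x y ≠ 0) :
    x = i₀ ∧ y = j := by
  have := adjacent_of_pathW_ne_zero hxy
  simp only [pathFarSide, mem_filter, mem_univ, true_and, Fin.lt_def, Fin.le_def] at hx hy
  exact ⟨Fin.ext (by omega), Fin.ext (by omega)⟩

lemma notMem_ltmSS_path_of_half_le {j i₀ : Fin N} (h0 : i₀.val ≠ 0) (h1 : i₀.val ≠ N - 1)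
    (hadj : i₀.val = j.val + 1 ∨ j.val = i₀.val + 1) (u : Fin N → Protocol)
    {ν : Fin N → Fin 1 → ℝ} (hνi₀ : 1 / 2 ≤ ν i₀ 0) (hν : ∀ b, 0 ≤ ν b 0) :
    i₀ ∉ ltmSS (fun _ : Fin 1 => pathW N) u {j} ν := by
  set C := pathFarSide j i₀
  have hjC : j ∉ C := by
    simp only [C, pathFarSide, mem_filter, mem_univ, true_and, Fin.lt_def, Fin.le_def]; omega
  have hi₀C : i₀ ∈ C := by
    simp only [C, pathFarSide, mem_filter, mem_univ, true_and, Fin.lt_def, Fin.le_def]; omega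
  have hinflow : ∀ x ∈ C, ∀ k : Fin 1, ∑ y ∈ Cᶜ, pathW N x y ≤ ν x k := by
    intro x hx k
    rw [Subsingleton.elim k 0]
    by_cases hxi₀ : x = i₀
    · subst hxi₀
      rw [sum_eq_single_of_mem j (mem_compl.2 hjC) fun y hy hyj => by_contra fun hxy =>
        hyj (eq_of_pathW_ne_zero_farSide hadj hx (mem_compl.1 hy) hxy).2]
      rwa [pathW_eq_half_of_interior h0 h1 (by omega)]
    · rw [sum_eq_zero fun y hy => by_contra fun hxy =>
        hxi₀ (eq_of_pathW_ne_zero_farSide hadj hx (mem_compl.1 hy) hxy).1]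
      exact hν x
  exact fun hi₀ => disjoint_left.1 (disjoint_ltmSS_of_inflow_le (fun _ => pathW_nonneg)
    (disjoint_singleton_left.2 hjC) hinflow) hi₀ hi₀C

lemma mem_ltmSS_path_of_lt_half {j i₀ : Fin N} (h0 : i₀.val ≠ 0) (h1 : i₀.val ≠ N - 1)
    (hadj : i₀.val = j.val + 1 ∨ j.val = i₀.val + 1) (u : Fin N → Protocol)
    {ν : Fin N → Fin 1 → ℝ} (hνi₀ : ν i₀ 0 < 1 / 2) :
    i₀ ∈ ltmSS (fun _ : Fin 1 => pathW N) u {j} ν :=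
  mem_ltmSS_of_lt_sum_seed u <| by
    rwa [sum_singleton, pathW_eq_half_of_interior h0 h1 (by omega)]

end Path

section SplitBox

variable {n m : ℕ}

def splitBox (i₀ : Fin n) (k : Fin m) : Set (Fin n → Fin m → ℝ) :=
  Set.univ.pi fun a => Set.univ.pi fun l =>
    if a = i₀ then (if l = k then Set.Ioo 0 (1 / 2) else Set.Ioo (1 / 2) 1) else Set.Icc 0 1

lemma measurableSet_splitBox (i₀ : Fin n) (k : Fin m) : MeasurableSet (splitBox i₀ k) :=
  .univ_pi fun a => .univ_pi fun l => by
    split_ifs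
    exacts [measurableSet_Ioo, measurableSet_Ioo, measurableSet_Icc]

lemma thMeasure_splitBox_ne_zero (i₀ : Fin n) (k : Fin m) : thMeasure n m (splitBox i₀ k) ≠ 0 :=
  thMeasure_pi_ne_zero fun a l => by
    split_ifs
    · exact volume_restrict_Icc_Ioo_ne_zero le_rfl (by norm_num) (by norm_num)
    · exact volume_restrict_Icc_Ioo_ne_zero (by norm_num) (by norm_num) le_rfl
    · simp [Measure.restrict_apply measurableSet_Icc, Real.volume_Icc]

variable {i₀ : Fin n} {k : Fin m} {μ : Fin n → Fin m → ℝ}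

lemma lt_half_of_mem_splitBox (hμ : μ ∈ splitBox i₀ k) : μ i₀ k < 1 / 2 := by
  have := hμ i₀ trivial k trivial
  simp only [↓reduceIte] at this
  exact this.2

lemma half_le_of_mem_splitBox (hμ : μ ∈ splitBox i₀ k) {l : Fin m} (hl : l ≠ k) :
    1 / 2 ≤ μ i₀ l := by
  have := hμ i₀ trivial l trivial
  simp only [↓reduceIte, hl] at this
  exact this.1.le

lemma nonneg_of_mem_splitBox (hμ : μ ∈ splitBox i₀ k) : 0 ≤ μ := fun a l => by
  have := hμ a trivial l trivial
  dsimp only at this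
  split_ifs at this
  · exact this.1.le
  · exact (one_half_pos.trans this.1).le
  · exact this.1

end SplitBox

section PathCentrality

variable {N : ℕ} {j i₀ : Fin N}

lemma casCen_path_monoplex_lt_duplex_OR (h0 : i₀.val ≠ 0) (h1 : i₀.val ≠ N - 1)
    (hadj : i₀.val = j.val + 1 ∨ j.val = i₀.val + 1) (u : Fin N → Protocol) :
    casCen (fun _ : Fin 1 => pathW N) u j
      < casCen (fun _ : Fin 2 => pathW N) (fun _ => Protocol.OR) j := by
  simp only [casCen, pLTM_eq_measure_layer _ u {j} _ (0 : Fin 2)]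
  simp only [pLTM, ltmSS_duplex_OR (pathW N) u]
  refine sum_measure_mem_ltmSS_lt (thMeasure N 2) (w := fun _ : Fin 1 => pathW N)
    (fun _ => pathW_nonneg) u {j} (ν := fun μ a _ => min (μ a 0) (μ a 1))
    (ν' := fun μ a _ => μ a 0) (fun μ a _ => min_le_left _ _) (i₀ := i₀)
    (measurableSet_splitBox i₀ 1) (thMeasure_splitBox_ne_zero i₀ 1) (fun μ hμ => ?_)
    (fun μ hμ => ?_)
  · exact mem_ltmSS_path_of_lt_half h0 h1 hadj u
      ((min_le_right _ _).trans_lt (lt_half_of_mem_splitBox hμ))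
  · exact notMem_ltmSS_path_of_half_le h0 h1 hadj u (half_le_of_mem_splitBox hμ zero_ne_one)
      fun b => nonneg_of_mem_splitBox hμ b 0

lemma casCen_path_duplex_AND_lt_monoplex (h0 : i₀.val ≠ 0) (h1 : i₀.val ≠ N - 1)
    (hadj : i₀.val = j.val + 1 ∨ j.val = i₀.val + 1) (u : Fin N → Protocol) :
    casCen (fun _ : Fin 2 => pathW N) (fun _ => Protocol.AND) j
      < casCen (fun _ : Fin 1 => pathW N) u j := by
  simp only [casCen, pLTM_eq_measure_layer _ u {j} _ (0 : Fin 2)]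
  simp only [pLTM, ltmSS_duplex_AND (pathW N) u]
  refine sum_measure_mem_ltmSS_lt (thMeasure N 2) (w := fun _ : Fin 1 => pathW N)
    (fun _ => pathW_nonneg) u {j} (ν := fun μ a _ => μ a 0)
    (ν' := fun μ a _ => max (μ a 0) (μ a 1)) (fun μ a _ => le_max_left _ _) (i₀ := i₀)
    (measurableSet_splitBox i₀ 0) (thMeasure_splitBox_ne_zero i₀ 0) (fun μ hμ => ?_)
    (fun μ hμ => ?_)
  · exact mem_ltmSS_path_of_lt_half h0 h1 hadj u (lt_half_of_mem_splitBox hμ)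
  · exact notMem_ltmSS_path_of_half_le h0 h1 hadj u
      ((half_le_of_mem_splitBox hμ one_ne_zero).trans (le_max_right _ _))
      fun b => (nonneg_of_mem_splitBox hμ b 0).trans (le_max_left _ _)

end PathCentrality

/-- protocol ordering of cascade centralities on the path networks:
for `N ≥ 4` and every seed `j`,
`C_j^{𝒢_R, OR} > C_j^{G_Pa} > C_j^{𝒢_R, AND}` (the monoplex centrality is the
same for every protocol assignment `u`, since OR and AND coincide there). -/
theorem path_cascade_centrality_ordering (N : ℕ) (hN : 4 ≤ N) (j : Fin N)
    (u : Fin N → Protocol) :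
    casCen (fun _ : Fin 2 => pathW N) (fun _ => Protocol.OR) j >
      casCen (fun _ : Fin 1 => pathW N) u j ∧
    casCen (fun _ : Fin 1 => pathW N) u j >
      casCen (fun _ : Fin 2 => pathW N) (fun _ => Protocol.AND) j := by
  obtain ⟨i₀, h0, h1, hadj⟩ := exists_interior_adjacent hN j
  exact ⟨casCen_path_monoplex_lt_duplex_OR h0 h1 hadj u,
    casCen_path_duplex_AND_lt_monoplex h0 h1 hadj u⟩
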